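/- Fix an integer d ≥ 1, an index x ∈ Fin d, and density matrices ρ, σ (positive semidefinite d×d complex matrices of trace 1). Then ∫_{U(d)} Tr(U |x⟩⟨x| Uᴴ ρ) · Tr(U |x⟩⟨x| Uᴴ σ) dU = (1 + Tr(ρσ)) / (d(d+1)), where the integral is with respect to the Haar probability measure on U(d), |x⟩⟨x| is the matrix unit at (x,x), and Uᴴ is the conjugate transpose. -/

import Mathlib

open MeasureTheory Matrix
open scoped ComplexOrder

/-- The Hermitian inner product `⟨u, v⟩ = ∑ i, conj (u i) * v i` on `ℂ^d`. -/
noncomputable def cInner {d : ℕ} (u v : Fin d → ℂ) : ℂ :=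
  ∑ i, (starRingEnd ℂ) (u i) * v i

/-- `μ` is the Haar probability measure on the compact group `U(d)` of `d × d`
complex unitary matrices, viewed as a Borel measure on the space of all `d × d`
complex matrices: it is a probability measure, it is supported on the unitary
matrices, and it is invariant under left translation by every unitary matrix.
(On the compact metrizable group `U(d)` these properties characterize the Haar
probability measure uniquely.) -/
def IsHaarUnitary {d : ℕ} (μ : Measure (Fin d → Fin d → ℂ)) : Prop :=
  IsProbabilityMeasure μ ∧
    (∀ᵐ U ∂μ, Matrix.of U ∈ Matrix.unitaryGroup (Fin d) ℂ) ∧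
    ∀ V ∈ Matrix.unitaryGroup (Fin d) ℂ,
      μ.map (fun U => Matrix.of.symm (V * Matrix.of U)) = μ

/-- The Haar pure-state measure `μ_d` on `ℂ^d`: the pushforward of the Haar
probability measure on `U(d)` under the map sending a unitary to its first
column. -/
noncomputable def pureStateMeasure {d : ℕ} (hd : 0 < d)
    (μ : Measure (Fin d → Fin d → ℂ)) : Measure (Fin d → ℂ) :=
  μ.map fun U i => U i ⟨0, hd⟩

/-- The Born-rule probability `|⟨U e_x, ψ⟩|²` of outcome `x` when measuring the
pure state `ψ` in the orthonormal basis given by the columns of `U`. -/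
noncomputable def bornP {d : ℕ} (U : Fin d → Fin d → ℂ) (x : Fin d)
    (ψ : Fin d → ℂ) : ℝ :=
  ‖∑ i, (starRingEnd ℂ) (U i x) * ψ i‖ ^ 2

/-!
The integrand depends on `U` only through its `x`-th column `u`, and
`Tr (U |x⟩⟨x| Uᴴ ρ) = u* ρ u`. The law of `u` is a unitarily invariant probability measure
on the unit sphere, and invariance pins down its fourth moments `E[ū_i u_j ū_k u_l]`:
diagonal phase unitaries kill them unless `{i, k} = {j, l}`, permutations make them
independent of the indices, the unitary square root `(1 + i)/2 + (1 - i)/2 P` of a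
transposition `P` gives `E|u_i|⁴ = 2 E|u_i|²|u_k|²`, and `∑ₖ |u_k|² = 1` fixes the scale.
Hence `E[ū_i u_j ū_k u_l] = (δ_ij δ_kl + δ_il δ_kj) / (d (d + 1))`, and contracting with
`ρ` and `σ` gives `(Tr ρ Tr σ + Tr ρσ) / (d (d + 1))`.
-/

section UnitSphere

variable {n : Type*} [Fintype n]

theorem star_dotProduct_self_eq_sum_norm_sq (v : n → ℂ) :
    star v ⬝ᵥ v = ((∑ i, ‖v i‖ ^ 2 : ℝ) : ℂ) := by
  simp [dotProduct, Complex.conj_mul']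

theorem norm_le_one_of_star_dotProduct_self_eq_one {v : n → ℂ} (hv : star v ⬝ᵥ v = 1)
    (i : n) : ‖v i‖ ≤ 1 := by
  rw [star_dotProduct_self_eq_sum_norm_sq, ← Complex.ofReal_one, Complex.ofReal_inj] at hv
  have : ‖v i‖ ^ 2 ≤ 1 :=
    hv ▸ Finset.single_le_sum (fun j _ => sq_nonneg ‖v j‖) (Finset.mem_univ i)
  nlinarith [norm_nonneg (v i)]

theorem isCompact_setOf_star_dotProduct_self_eq_one :
    IsCompact {v : n → ℂ | star v ⬝ᵥ v = 1} := by
  refine Metric.isCompact_of_isClosed_isBounded (isClosed_eq (by fun_prop) continuous_const)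
    ((Metric.isBounded_closedBall (x := 0) (r := 1)).subset fun v hv => ?_)
  simpa [pi_norm_le_iff_of_nonneg] using norm_le_one_of_star_dotProduct_self_eq_one hv

end UnitSphere

section Unitaries

variable {n : Type*} [Fintype n] [DecidableEq n]

theorem permMatrix_mem_unitaryGroup (σ : Equiv.Perm n) :
    σ.permMatrix ℂ ∈ unitaryGroup n ℂ := by
  rw [mem_unitaryGroup_iff', star_eq_conjTranspose, conjTranspose_permMatrix, ← permMatrix_mul,
    mul_inv_cancel, permMatrix_one]

theorem diagonal_mem_unitaryGroup {z : n → ℂ} (hz : star z * z = 1) :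
    diagonal z ∈ unitaryGroup n ℂ := by
  rw [mem_unitaryGroup_iff', star_eq_conjTranspose, diagonal_conjTranspose, diagonal_mul_diagonal]
  exact congrArg diagonal hz |>.trans diagonal_one

theorem smul_one_add_smul_mem_unitaryGroup {P : Matrix n n ℂ} (hP : star P = P)
    (hPP : P * P = 1) :
    ((1 + Complex.I) / 2) • (1 : Matrix n n ℂ) + ((1 - Complex.I) / 2) • P
      ∈ unitaryGroup n ℂ := by
  rw [mem_unitaryGroup_iff']
  have hc : star ((1 + Complex.I) / 2) = (1 - Complex.I) / 2 := by simp [sub_eq_add_neg]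
  have hc' : star ((1 - Complex.I) / 2) = (1 + Complex.I) / 2 := by simp
  simp only [star_add, star_smul, star_one, hP, hc, hc', add_mul, mul_add, smul_mul_smul, one_mul,
    mul_one, hPP]
  linear_combination (norm := module)
    Complex.I_sq • ((-1 / 2 : ℂ) • (1 : Matrix n n ℂ) + (1 / 2 : ℂ) • P)

end Unitaries

structure IsUnitarilyInvariantOnSphere {n : Type*} [Fintype n] [DecidableEq n]
    (ν : Measure (n → ℂ)) : Prop where
  isProbabilityMeasure : IsProbabilityMeasure ν
  ae_star_dotProduct_self_eq_one : ∀ᵐ v ∂ν, star v ⬝ᵥ v = 1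
  map_mulVec : ∀ V ∈ unitaryGroup n ℂ, ν.map (V *ᵥ ·) = ν

noncomputable def fourthMoment {n : Type*} (ν : Measure (n → ℂ)) (i j k l : n) : ℂ :=
  ∫ v, star (v i) * v j * (star (v k) * v l) ∂ν

theorem fourthMoment_comm {n : Type*} (ν : Measure (n → ℂ)) (i j k l : n) :
    fourthMoment ν i j k l = fourthMoment ν i l k j := by
  simp only [fourthMoment]
  congr 1; ext v; ring

namespace IsUnitarilyInvariantOnSphere

variable {n : Type*} [Fintype n] [DecidableEq n] {ν : Measure (n → ℂ)}

section Integral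

variable {E : Type*} [NormedAddCommGroup E]

theorem integrable (hν : IsUnitarilyInvariantOnSphere ν) {f : (n → ℂ) → E}
    (hf : Continuous f) : Integrable f ν := by
  have := hν.isProbabilityMeasure
  rw [← Measure.restrict_eq_self_of_ae_mem hν.ae_star_dotProduct_self_eq_one]
  exact hf.continuousOn.integrableOn_compact isCompact_setOf_star_dotProduct_self_eq_one

variable [NormedSpace ℝ E]

theorem integral_comp_mulVec (hν : IsUnitarilyInvariantOnSphere ν) {V : Matrix n n ℂ}
    (hV : V ∈ unitaryGroup n ℂ) {f : (n → ℂ) → E} (hf : Continuous f) :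
    ∫ v, f (V *ᵥ v) ∂ν = ∫ v, f v ∂ν := by
  conv_rhs => rw [← hν.map_mulVec V hV]
  exact (integral_map (by fun_prop : Continuous (V *ᵥ ·)).aemeasurable
    hf.aestronglyMeasurable).symm

theorem integral_comp_perm (hν : IsUnitarilyInvariantOnSphere ν) (σ : Equiv.Perm n)
    {f : (n → ℂ) → E} (hf : Continuous f) : ∫ v, f (v ∘ σ) ∂ν = ∫ v, f v ∂ν := by
  simpa only [permMatrix_mulVec] using hν.integral_comp_mulVec (permMatrix_mem_unitaryGroup σ) hf

theorem integral_comp_mul (hν : IsUnitarilyInvariantOnSphere ν) {z : n → ℂ}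
    (hz : star z * z = 1) {f : (n → ℂ) → E} (hf : Continuous f) :
    ∫ v, f (z * v) ∂ν = ∫ v, f v ∂ν := by
  have hzv (v : n → ℂ) : diagonal z *ᵥ v = z * v := funext (mulVec_diagonal z v)
  simpa only [hzv] using hν.integral_comp_mulVec (diagonal_mem_unitaryGroup hz) hf

theorem integral_comp_sqrt_swap (hν : IsUnitarilyInvariantOnSphere ν) (i k : n)
    {f : (n → ℂ) → E} (hf : Continuous f) :
    ∫ v, f (((1 + Complex.I) / 2) • v + ((1 - Complex.I) / 2) • (v ∘ Equiv.swap i k)) ∂ν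
      = ∫ v, f v ∂ν := by
  have hP : star ((Equiv.swap i k).permMatrix ℂ) = (Equiv.swap i k).permMatrix ℂ := by
    rw [star_eq_conjTranspose, conjTranspose_permMatrix, Equiv.swap_inv]
  have hPP : (Equiv.swap i k).permMatrix ℂ * (Equiv.swap i k).permMatrix ℂ = 1 := by
    rw [← permMatrix_mul, Equiv.swap_mul_self, permMatrix_one]
  simpa only [add_mulVec, smul_mulVec, one_mulVec, permMatrix_mulVec] using
    hν.integral_comp_mulVec (smul_one_add_smul_mem_unitaryGroup hP hPP) hf

end Integral

theorem fourthMoment_eq_phase_mul (hν : IsUnitarilyInvariantOnSphere ν) {z : n → ℂ}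
    (hz : star z * z = 1) (i j k l : n) :
    fourthMoment ν i j k l = star (z i) * z j * (star (z k) * z l) * fourthMoment ν i j k l := by
  calc fourthMoment ν i j k l
      = ∫ v, star ((z * v) i) * (z * v) j * (star ((z * v) k) * (z * v) l) ∂ν :=
        (hν.integral_comp_mul hz (by fun_prop)).symm
    _ = ∫ v, star (z i) * z j * (star (z k) * z l) * (star (v i) * v j * (star (v k) * v l))
          ∂ν := by
        simp only [Pi.mul_apply, star_mul']
        congr 1; ext v; ring
    _ = _ := integral_const_mul _ _

theorem fourthMoment_eq_zero (hν : IsUnitarilyInvariantOnSphere ν) {i j k l : n}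
    (h₁ : ¬(i = j ∧ k = l)) (h₂ : ¬(i = l ∧ k = j)) : fourthMoment ν i j k l = 0 := by
  by_contra hM
  -- The phase `z p` scales the moment by `i ^ (#{j, l} ∩ {p} - #{i, k} ∩ {p})`, so testing
  -- `p = i` and `p = k` detects `{i, k} ≠ {j, l}`.
  let z (p : n) : n → ℂ := fun t => if t = p then Complex.I else 1
  have hz (p : n) : star (z p) * z p = 1 := by
    ext t; by_cases ht : t = p <;> simp [z, ht]
  have hzi := (mul_eq_right₀ hM).mp (hν.fourthMoment_eq_phase_mul (hz i) i j k l).symm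
  have hzk := (mul_eq_right₀ hM).mp (hν.fourthMoment_eq_phase_mul (hz k) i j k l).symm
  simp only [z, if_pos rfl] at hzi hzk
  split_ifs at hzi hzk <;> simp [Complex.ext_iff] at hzi hzk <;> grind

theorem integral_star_mul_self (hν : IsUnitarilyInvariantOnSphere ν) (i : n) :
    ∫ v, star (v i) * v i ∂ν = 1 / Fintype.card n := by
  have := hν.isProbabilityMeasure
  have hperm (j : n) : ∫ v, star (v j) * v j ∂ν = ∫ v, star (v i) * v i ∂ν := by
    simpa using hν.integral_comp_perm (Equiv.swap i j) (f := fun v => star (v i) * v i)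
      (by fun_prop)
  have hsum : ∑ j, ∫ v, star (v j) * v j ∂ν = 1 := by
    rw [← integral_finsetSum _ fun j _ => hν.integrable (by fun_prop)]
    exact (integral_congr_ae hν.ae_star_dotProduct_self_eq_one).trans (by simp)
  rw [Finset.sum_congr rfl fun j _ => hperm j, Finset.sum_const, Finset.card_univ,
    nsmul_eq_mul] at hsum
  exact eq_one_div_of_mul_eq_one_right hsum

theorem sum_fourthMoment_self_self (hν : IsUnitarilyInvariantOnSphere ν) (i : n) :
    ∑ k, fourthMoment ν i i k k = 1 / Fintype.card n := by
  simp only [fourthMoment]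
  rw [← hν.integral_star_mul_self i,
    ← integral_finsetSum _ fun k _ => hν.integrable (by fun_prop)]
  refine integral_congr_ae (hν.ae_star_dotProduct_self_eq_one.mono fun v hv => ?_)
  dsimp only
  rw [← Finset.mul_sum, ← dotProduct, ← Pi.star_def, hv, mul_one]

theorem fourthMoment_diag_eq (hν : IsUnitarilyInvariantOnSphere ν) (i k : n) :
    fourthMoment ν i i i i = fourthMoment ν k k k k := by
  simp only [fourthMoment]
  simpa using (hν.integral_comp_perm (Equiv.swap i k)
    (f := fun v => star (v i) * v i * (star (v i) * v i)) (by fun_prop)).symm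

theorem fourthMoment_diag_eq_two_mul (hν : IsUnitarilyInvariantOnSphere ν) {i k : n}
    (hik : i ≠ k) : fourthMoment ν i i i i = 2 * fourthMoment ν i i k k := by
  -- The square root of the swap sends `v i` to `(1 + i)/2 · (v i - i v k)`, and averaging
  -- `g s` over `s ∈ {1, i, -1, -i}` kills the cross terms of `|v i + s v k|⁴`.
  let g (s : ℂ) (v : n → ℂ) : ℂ := (star (v i + s * v k) * (v i + s * v k)) ^ 2
  have hg_cont (s : ℂ) : Continuous (g s) := by fun_prop
  have hg_phase (s : ℂ) (hs : star s * s = 1) : ∫ v, g s v ∂ν = ∫ v, g 1 v ∂ν := by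
    have hz : star (Function.update (1 : n → ℂ) k s) * Function.update (1 : n → ℂ) k s
        = 1 := by
      ext t
      by_cases ht : t = k
      · simpa [ht] using hs
      · simp [ht]
    simpa [g, hik] using hν.integral_comp_mul hz (hg_cont 1)
  have hg_sqrt_swap : fourthMoment ν i i i i = (∫ v, g (-Complex.I) v ∂ν) / 4 := by
    rw [fourthMoment, ← hν.integral_comp_sqrt_swap i k
      (f := fun v => star (v i) * v i * (star (v i) * v i)) (by fun_prop), ← integral_div]
    congr 1; ext v
    simp only [g, Pi.add_apply, Pi.smul_apply, Function.comp_apply, Equiv.swap_apply_left,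
      smul_eq_mul, star_add, star_mul', Complex.star_def, Complex.conj_I, map_sub, map_add,
      map_neg, map_one, map_div₀, map_ofNat]
    ring_nf
    simp only [Complex.I_sq, Complex.I_pow_three, Complex.I_pow_four]
    ring
  have hg_average (v : n → ℂ) : g 1 v + g Complex.I v + g (-1) v + g (-Complex.I) v
      = 4 * (star (v i) * v i * (star (v i) * v i) + star (v k) * v k * (star (v k) * v k)
        + 4 * (star (v i) * v i * (star (v k) * v k))) := by
    simp only [g, star_add, star_mul', Complex.star_def, Complex.conj_I, map_neg, map_one]
    ring_nf
    simp only [Complex.I_sq, Complex.I_pow_four]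
    ring
  have hsum : 4 * ∫ v, g 1 v ∂ν = 4 * (fourthMoment ν i i i i + fourthMoment ν k k k k
      + 4 * fourthMoment ν i i k k) := by
    calc 4 * ∫ v, g 1 v ∂ν
        = ∫ v, g 1 v ∂ν + ∫ v, g Complex.I v ∂ν + ∫ v, g (-1) v ∂ν
          + ∫ v, g (-Complex.I) v ∂ν := by
          rw [hg_phase Complex.I (by simp), hg_phase (-1) (by simp),
            hg_phase (-Complex.I) (by simp)]
          ring
      _ = ∫ v, (g 1 v + g Complex.I v + g (-1) v + g (-Complex.I) v) ∂ν := by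
          rw [integral_add, integral_add, integral_add] <;> exact hν.integrable (by fun_prop)
      _ = _ := by
          simp only [hg_average, fourthMoment]
          rw [integral_const_mul, integral_add, integral_add, integral_const_mul] <;>
            exact hν.integrable (by fun_prop)
  linear_combination hsum / 8 + 2 * hg_sqrt_swap + hg_phase (-Complex.I) (by simp) / 2
    + hν.fourthMoment_diag_eq k i / 2

theorem fourthMoment_self_self (hν : IsUnitarilyInvariantOnSphere ν) (i k : n) :
    fourthMoment ν i i k k
      = (1 + if i = k then 1 else 0) / (Fintype.card n * (Fintype.card n + 1)) := by
  have hk (k : n) : fourthMoment ν i i k k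
      = (1 + if i = k then 1 else 0) * (fourthMoment ν i i i i / 2) := by
    by_cases hik : i = k
    · rw [if_pos hik, hik]; ring
    · rw [hν.fourthMoment_diag_eq_two_mul hik, if_neg hik]; ring
  have hsum := hν.sum_fourthMoment_self_self i
  rw [Finset.sum_congr rfl fun k _ => hk k] at hsum
  simp only [← Finset.sum_mul, Finset.sum_add_distrib, Finset.sum_ite_eq, Finset.mem_univ,
    if_true, Finset.sum_const, Finset.card_univ, nsmul_eq_mul, mul_one] at hsum
  have : Nonempty n := ⟨i⟩
  have hcard : (Fintype.card n : ℂ) ≠ 0 := Nat.cast_ne_zero.mpr Fintype.card_ne_zero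
  rw [eq_div_iff hcard] at hsum
  rw [hk k, eq_div_iff (by positivity)]
  linear_combination (1 + if i = k then 1 else 0) * hsum

theorem fourthMoment_eq (hν : IsUnitarilyInvariantOnSphere ν) (i j k l : n) :
    fourthMoment ν i j k l
      = ((if i = j ∧ k = l then 1 else 0) + (if i = l ∧ k = j then 1 else 0))
        / (Fintype.card n * (Fintype.card n + 1)) := by
  by_cases h₁ : i = j ∧ k = l
  · obtain ⟨rfl, rfl⟩ := h₁
    rw [hν.fourthMoment_self_self]
    by_cases hik : i = k <;> simp [hik, eq_comm]
  by_cases h₂ : i = l ∧ k = j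
  · obtain ⟨rfl, rfl⟩ := h₂
    rw [fourthMoment_comm, hν.fourthMoment_self_self, if_neg h₁,
      if_neg fun h => h₁ ⟨h, h.symm⟩]
    simp
  rw [hν.fourthMoment_eq_zero h₁ h₂, if_neg h₁, if_neg h₂]
  simp

theorem integral_star_dotProduct_mulVec_mul (hν : IsUnitarilyInvariantOnSphere ν)
    (A B : Matrix n n ℂ) :
    ∫ v, (star v ⬝ᵥ A *ᵥ v) * (star v ⬝ᵥ B *ᵥ v) ∂ν
      = (A.trace * B.trace + (A * B).trace) / (Fintype.card n * (Fintype.card n + 1)) := by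
  have hexpand (v : n → ℂ) : (star v ⬝ᵥ A *ᵥ v) * (star v ⬝ᵥ B *ᵥ v)
      = ∑ a, ∑ c, ∑ e, ∑ b, A a b * B c e * (star (v a) * v b * (star (v c) * v e)) := by
    simp only [dotProduct, mulVec, Pi.star_apply]
    rw [Finset.sum_mul_sum]
    simp only [Finset.mul_sum, Finset.sum_mul]
    refine Finset.sum_congr rfl fun a _ => Finset.sum_congr rfl fun c _ =>
      Finset.sum_congr rfl fun e _ => Finset.sum_congr rfl fun b _ => by ring
  simp only [hexpand]
  simp (disch := intros; exact hν.integrable (by fun_prop)) only [integral_finsetSum]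
  have hM := hν.fourthMoment_eq
  simp only [fourthMoment] at hM
  simp only [integral_const_mul, hM, mul_div_assoc', ← Finset.sum_div]
  congr 1
  simp [mul_add, ite_and, Finset.sum_add_distrib, Finset.sum_ite_irrel, trace, mul_apply,
    Finset.sum_mul_sum]

end IsUnitarilyInvariantOnSphere

theorem trace_mul_single_mul_conjTranspose_mul {m k : Type*} [Fintype m] [Fintype k]
    [DecidableEq k] (U : Matrix m k ℂ) (x : k) (A : Matrix m m ℂ) :
    (U * single x x (1 : ℂ) * Uᴴ * A).trace
      = star (fun i => U i x) ⬝ᵥ A *ᵥ fun i => U i x := by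
  rw [Matrix.mul_assoc, Matrix.mul_assoc, trace_mul_comm, Matrix.mul_assoc, trace_single_mul,
    one_smul]
  simp only [mul_apply, conjTranspose_apply, RCLike.star_def, Finset.sum_mul, mul_assoc, dotProduct,
    Pi.star_apply, mulVec, Finset.mul_sum]
  exact Finset.sum_comm

theorem IsHaarUnitary.isUnitarilyInvariantOnSphere_map {d : ℕ}
    {μ : Measure (Fin d → Fin d → ℂ)} (hμ : IsHaarUnitary μ) (x : Fin d) :
    IsUnitarilyInvariantOnSphere (μ.map fun U i => U i x) := by
  obtain ⟨hprob, hunit, hinv⟩ := hμ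
  have hcol : Measurable fun (U : Fin d → Fin d → ℂ) (i : Fin d) => U i x := by fun_prop
  refine ⟨Measure.isProbabilityMeasure_map hcol.aemeasurable, ?_, fun V hV => ?_⟩
  · rw [ae_map_iff hcol.aemeasurable (isClosed_eq (by fun_prop) continuous_const).measurableSet]
    filter_upwards [hunit] with U hU
    simpa [mul_apply, dotProduct] using congrFun (congrFun (mem_unitaryGroup_iff'.mp hU) x) x
  · have hV_mul : Continuous fun U : Fin d → Fin d → ℂ => of.symm (V * of U) :=
      continuous_const.matrix_mul continuous_id
    rw [Measure.map_map (by fun_prop) hcol]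
    conv_rhs => rw [← hinv V hV]
    rw [Measure.map_map hcol hV_mul.measurable]
    rfl

theorem haar_average_born_product_general {d : ℕ}
    (μU : Measure (Fin d → Fin d → ℂ)) (hμU : IsHaarUnitary μU) (x : Fin d)
    (ρ σ : Matrix (Fin d) (Fin d) ℂ)
    (hρtr : ρ.trace = 1) (hσtr : σ.trace = 1) :
    ∫ U, (Matrix.of U * Matrix.single x x 1 * (Matrix.of U)ᴴ * ρ).trace *
        (Matrix.of U * Matrix.single x x 1 * (Matrix.of U)ᴴ * σ).trace ∂μU
      = (1 + (ρ * σ).trace) / (d * (d + 1)) := by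
  have hcol : Measurable fun (U : Fin d → Fin d → ℂ) (i : Fin d) => U i x := by fun_prop
  simp only [trace_mul_single_mul_conjTranspose_mul, of_apply]
  rw [← integral_map (f := fun v => (star v ⬝ᵥ ρ *ᵥ v) * (star v ⬝ᵥ σ *ᵥ v))
      hcol.aemeasurable (by fun_prop : Continuous _).aestronglyMeasurable,
    (hμU.isUnitarilyInvariantOnSphere_map x).integral_star_dotProduct_mulVec_mul, hρtr, hσtr,
    Fintype.card_fin, one_mul]

/-- For density matrices `ρ, σ` and a fixed outcome `x`, the Haar average of the
product of the two Born-rule outcome probabilities is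
`∫ Tr(U|x⟩⟨x|Uᴴ ρ) · Tr(U|x⟩⟨x|Uᴴ σ) dU = (1 + Tr(ρσ)) / (d (d + 1))`. -/
theorem haar_average_born_product {d : ℕ} (hd : 0 < d)
    (μU : Measure (Fin d → Fin d → ℂ)) (hμU : IsHaarUnitary μU) (x : Fin d)
    (ρ σ : Matrix (Fin d) (Fin d) ℂ) (hρ : ρ.PosSemidef) (hσ : σ.PosSemidef)
    (hρtr : ρ.trace = 1) (hσtr : σ.trace = 1) :
    ∫ U, (Matrix.of U * Matrix.single x x 1 * (Matrix.of U)ᴴ * ρ).trace *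
        (Matrix.of U * Matrix.single x x 1 * (Matrix.of U)ᴴ * σ).trace ∂μU
      = (1 + (ρ * σ).trace) / (d * (d + 1)) :=
  haar_average_born_product_general μU hμU x ρ σ hρtr hσtr
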